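/- arXiv:2310.12096 — 2 statements merged into one kernel-verified Lean document; each statement's English description precedes it below -/
import Mathlib

section
/- Conversely, if C is an (s,t)-cut with vital edge e as a contributing edge, and there exists a maximum (s,t)-flow f such that all incoming edges of C carry zero flow and every contributing edge of C other than e is fully saturated while e carries w_min(e) flow, then C is a mincut for e, i.e., C has least capacity among all (s,t)-cuts in which e contributes. -/
open Finset

variable {V : Type*} [Fintype V] [DecidableEq V]

/-- capacity of the cut given by the source-side vertex set `C`:
total capacity of edges with tail in `C` and head outside `C`. -/
noncomputable def cutCap (E : Finset (V × V)) (w : V × V → ℝ) (C : Finset V) : ℝ :=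
  ∑ e ∈ E.filter (fun e => e.1 ∈ C ∧ e.2 ∉ C), w e

/-- `C` is an (s,t)-cut. -/
def IsCut (s t : V) (C : Finset V) : Prop := s ∈ C ∧ t ∉ C

/-- edge `e` is a contributing (outgoing) edge of the cut `C`. -/
def Contributes (e : V × V) (C : Finset V) : Prop := e.1 ∈ C ∧ e.2 ∉ C

/-- `f` is a feasible (s,t)-flow on edge set `E` with capacities `w`. -/
structure IsFlow (E : Finset (V × V)) (w : V × V → ℝ) (s t : V) (f : V × V → ℝ) : Prop where
  nonneg : ∀ e ∈ E, 0 ≤ f e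
  le_cap : ∀ e ∈ E, f e ≤ w e
  support : ∀ e, e ∉ E → f e = 0
  conserve : ∀ v, v ≠ s → v ≠ t →
    ∑ e ∈ E.filter (fun e => e.1 = v), f e = ∑ e ∈ E.filter (fun e => e.2 = v), f e

/-- value of an (s,t)-flow: the net flow out of `s`. -/
noncomputable def flowValue (E : Finset (V × V)) (s : V) (f : V × V → ℝ) : ℝ :=
  ∑ e ∈ E.filter (fun e => e.1 = s), f e - ∑ e ∈ E.filter (fun e => e.2 = s), f e

/-- `f` is a maximum (s,t)-flow. -/
def IsMaxFlow (E : Finset (V × V)) (w : V × V → ℝ) (s t : V) (f : V × V → ℝ) : Prop :=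
  IsFlow E w s t f ∧ ∀ g, IsFlow E w s t g → flowValue E s g ≤ flowValue E s f

/-- capacity of a minimum (s,t)-cut. -/
noncomputable def minCutCap (E : Finset (V × V)) (w : V × V → ℝ) (s t : V) : ℝ :=
  sInf {x | ∃ C : Finset V, IsCut s t C ∧ cutCap E w C = x}

/-- `e` is a vital edge: deleting it strictly decreases the min (s,t)-cut capacity. -/
def Vital (E : Finset (V × V)) (w : V × V → ℝ) (s t : V) (e : V × V) : Prop :=
  e ∈ E ∧ minCutCap (E.erase e) w s t < minCutCap E w s t

/-- `C` is a mincut for the edge `e`: a least-capacity (s,t)-cut in which `e` contributes. -/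
def IsMincutFor (E : Finset (V × V)) (w : V × V → ℝ) (s t : V) (e : V × V)
    (C : Finset V) : Prop :=
  IsCut s t C ∧ Contributes e C ∧
    ∀ C', IsCut s t C' → Contributes e C' → cutCap E w C ≤ cutCap E w C'

/-- total flow on edges leaving the cut `C`. -/
noncomputable def flowOut (E : Finset (V × V)) (f : V × V → ℝ) (C : Finset V) : ℝ :=
  ∑ e ∈ E.filter (fun e => e.1 ∈ C ∧ e.2 ∉ C), f e

/-- total flow on edges entering the cut `C`. -/
noncomputable def flowIn (E : Finset (V × V)) (f : V × V → ℝ) (C : Finset V) : ℝ :=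
  ∑ e ∈ E.filter (fun e => e.1 ∉ C ∧ e.2 ∈ C), f e

/-! Every (s,t)-flow `f` and cut `C` satisfy
`cap C - val f = ∑_{e out of C} (w e - f e) + ∑_{e into C} f e`, a sum of nonnegative slacks.
If `f` leaves slack only on a set `S` of edges, then `cap C = val f + slack(S)`, while every
cut crossed by all of `S` has capacity at least `val f + slack(S)`. Taking `S` to be the
edge `e` gives the theorem. -/

section

variable {α : Type*} [DecidableEq α] {E : Finset (α × α)} {w : α × α → ℝ} {s t : α}
  {f : α × α → ℝ}

lemma sum_tail_mem_sub_sum_head_mem (E : Finset (α × α)) (f : α × α → ℝ) (C : Finset α) :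
    ∑ e ∈ E with e.1 ∈ C, f e - ∑ e ∈ E with e.2 ∈ C, f e =
      flowOut E f C - flowIn E f C := by
  simp only [flowOut, flowIn, sum_filter, ← sum_sub_distrib]
  refine sum_congr rfl fun e _ => ?_
  by_cases h₁ : e.1 ∈ C <;> by_cases h₂ : e.2 ∈ C <;> simp [h₁, h₂]

lemma IsFlow.flowValue_eq_flowOut_sub_flowIn (hf : IsFlow E w s t f) {C : Finset α}
    (hC : IsCut s t C) : flowValue E s f = flowOut E f C - flowIn E f C := by
  have hnet : ∑ v ∈ C, (∑ e ∈ E with e.1 = v, f e - ∑ e ∈ E with e.2 = v, f e) =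
      flowValue E s f := by
    rw [sum_eq_single_of_mem s hC.1 fun v hv hvs => ?_]
    · rfl
    · rw [hf.conserve v hvs (ne_of_mem_of_not_mem hv hC.2), sub_self]
  rw [← hnet, sum_sub_distrib, sum_fiberwise_eq_sum_filter, sum_fiberwise_eq_sum_filter,
    sum_tail_mem_sub_sum_head_mem]

lemma IsFlow.cutCap_sub_flowValue (hf : IsFlow E w s t f) {C : Finset α} (hC : IsCut s t C) :
    cutCap E w C - flowValue E s f =
      ∑ e ∈ E with e.1 ∈ C ∧ e.2 ∉ C, (w e - f e) + flowIn E f C := by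
  rw [hf.flowValue_eq_flowOut_sub_flowIn hC, cutCap, flowOut, sum_sub_distrib]
  ring

lemma IsFlow.sum_sub_le_cutCap_sub_flowValue (hf : IsFlow E w s t f) {C : Finset α}
    (hC : IsCut s t C) {S : Finset (α × α)} (hSE : S ⊆ E)
    (hSC : ∀ e ∈ S, Contributes e C) :
    ∑ e ∈ S, (w e - f e) ≤ cutCap E w C - flowValue E s f := by
  have hS : S ⊆ E.filter (fun e => e.1 ∈ C ∧ e.2 ∉ C) := fun e he =>
    mem_filter.2 ⟨hSE he, hSC e he⟩
  have hslack :
      ∑ e ∈ S, (w e - f e) ≤ ∑ e ∈ E with e.1 ∈ C ∧ e.2 ∉ C, (w e - f e) :=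
    sum_le_sum_of_subset_of_nonneg hS fun e he _ =>
      sub_nonneg.2 (hf.le_cap e (mem_filter.1 he).1)
  have hin : 0 ≤ flowIn E f C := sum_nonneg fun e he => hf.nonneg e (mem_filter.1 he).1
  rw [hf.cutCap_sub_flowValue hC]
  linarith

lemma IsFlow.cutCap_sub_flowValue_eq_sum_sub (hf : IsFlow E w s t f) {C : Finset α}
    (hC : IsCut s t C) {S : Finset (α × α)} (hSE : S ⊆ E)
    (hSC : ∀ e ∈ S, Contributes e C)
    (hin : ∀ e ∈ E, e.1 ∉ C → e.2 ∈ C → f e = 0)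
    (hsat : ∀ e ∈ E, e ∉ S → Contributes e C → f e = w e) :
    cutCap E w C - flowValue E s f = ∑ e ∈ S, (w e - f e) := by
  have hflowIn : flowIn E f C = 0 := sum_eq_zero fun e he => by
    obtain ⟨heE, h₁, h₂⟩ := mem_filter.1 he
    exact hin e heE h₁ h₂
  have hS : S ⊆ E.filter (fun e => e.1 ∈ C ∧ e.2 ∉ C) := fun e he =>
    mem_filter.2 ⟨hSE he, hSC e he⟩
  rw [hf.cutCap_sub_flowValue hC, hflowIn, add_zero]
  refine (sum_subset hS fun e he heS => ?_).symm
  obtain ⟨heE, hcontrib⟩ := mem_filter.1 he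
  rw [hsat e heE heS hcontrib, sub_self]

theorem IsFlow.cutCap_le_of_saturates (hf : IsFlow E w s t f) {S : Finset (α × α)}
    (hSE : S ⊆ E) {C C' : Finset α} (hC : IsCut s t C) (hC' : IsCut s t C')
    (hSC : ∀ e ∈ S, Contributes e C) (hSC' : ∀ e ∈ S, Contributes e C')
    (hin : ∀ e ∈ E, e.1 ∉ C → e.2 ∈ C → f e = 0)
    (hsat : ∀ e ∈ E, e ∉ S → Contributes e C → f e = w e) :
    cutCap E w C ≤ cutCap E w C' := by
  have hCeq := hf.cutCap_sub_flowValue_eq_sum_sub hC hSE hSC hin hsat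
  have hC'le := hf.sum_sub_le_cutCap_sub_flowValue hC' hSE hSC'
  linarith

end

theorem genFlowCut_converse_general (E : Finset (V × V)) (w : V × V → ℝ) (s t : V)
    (e : V × V) (C : Finset V)
    (hCcut : IsCut s t C) (hcontrib : Contributes e C)
    (hf : ∃ f, IsMaxFlow E w s t f ∧
      (∀ e' ∈ E, e'.1 ∉ C → e'.2 ∈ C → f e' = 0) ∧
      f e = minCutCap E w s t - minCutCap (E.erase e) w s t ∧
      (∀ e' ∈ E, e' ≠ e → Contributes e' C → f e' = w e')) :
    IsMincutFor E w s t e C := by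
  obtain ⟨f, ⟨hflow, -⟩, hin, -, hsat⟩ := hf
  refine ⟨hCcut, hcontrib, fun C' hC' hcontrib' => ?_⟩
  have hS : ∀ e' ∈ E.filter (· = e), e' = e := fun e' he' => (mem_filter.1 he').2
  exact hflow.cutCap_le_of_saturates (filter_subset _ E) hCcut hC'
    (fun e' he' => hS e' he' ▸ hcontrib) (fun e' he' => hS e' he' ▸ hcontrib') hin
    fun e' he' heS => hsat e' he' fun h => heS (mem_filter.2 ⟨he', h⟩)

/-- GenFlowCut, converse direction. -/
theorem genFlowCut_converse (E : Finset (V × V)) (w : V × V → ℝ) (s t : V)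
    (hst : s ≠ t) (hpos : ∀ e ∈ E, 0 < w e) (e : V × V)
    (hvit : Vital E w s t e) (C : Finset V)
    (hCcut : IsCut s t C) (hcontrib : Contributes e C)
    (hf : ∃ f, IsMaxFlow E w s t f ∧
      (∀ e' ∈ E, e'.1 ∉ C → e'.2 ∈ C → f e' = 0) ∧
      f e = minCutCap E w s t - minCutCap (E.erase e) w s t ∧
      (∀ e' ∈ E, e' ≠ e → Contributes e' C → f e' = w e')) :
    IsMincutFor E w s t e C :=
  genFlowCut_converse_general E w s t e C hCcut hcontrib hf
end

section
/- Let e be a vital edge and C(e) a mincut for e. Then every edge entering C(e) (tail outside C(e), head inside C(e)) is nonvital, i.e., removing such an edge does not decrease the minimum (s,t)-cut capacity. -/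
open Finset

variable {V : Type*} [Fintype V] [DecidableEq V]

/-! Uncrossing. Let `λ` be the min-cut capacity, `C` a mincut for the vital edge `e`, so
`cap C - w e < λ`, and suppose an edge `e'` entering `C` were vital, witnessed by a cut `D` in which
`e'` contributes and `cap D - w e' < λ`. By submodularity,
`cap (C ∪ D) + cap (C ∩ D) + w(C \ D → D \ C) + w(D \ C → C \ D) = cap C + cap D`, and `e'` runs
from `D \ C` to `C \ D`. Depending on where the ends of `e` lie relative to `D`, either `e`
contributes to `C ∩ D` or to `C ∪ D` (so that cut costs at least `cap C`), or `e` runs from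
`C \ D` to `D \ C`; in each case `cap D - w e' ≥ λ`. -/

section Uncrossing

variable {α : Type*} [DecidableEq α] {E : Finset (α × α)} {w : α × α → ℝ} {s t : α}
  {C D : Finset α} {e : α × α}

noncomputable def crossCap (E : Finset (α × α)) (w : α × α → ℝ) (A B : Finset α) : ℝ :=
  ∑ e ∈ E.filter (fun e => e.1 ∈ A ∧ e.2 ∈ B), w e

lemma IsCut.union (hC : IsCut s t C) (hD : IsCut s t D) : IsCut s t (C ∪ D) :=
  ⟨mem_union_left _ hC.1, by simp [hC.2, hD.2]⟩

lemma IsCut.inter (hC : IsCut s t C) (hD : IsCut s t D) : IsCut s t (C ∩ D) :=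
  ⟨mem_inter.mpr ⟨hC.1, hD.1⟩, fun h => hC.2 (mem_inter.mp h).1⟩

lemma Contributes.inter (he : Contributes e C) (h1 : e.1 ∈ D) : Contributes e (C ∩ D) :=
  ⟨mem_inter.mpr ⟨he.1, h1⟩, fun h => he.2 (mem_inter.mp h).1⟩

lemma Contributes.union (he : Contributes e C) (h2 : e.2 ∉ D) : Contributes e (C ∪ D) :=
  ⟨mem_union_left _ he.1, by simp [he.2, h2]⟩

lemma crossCap_nonneg (hw : ∀ e ∈ E, 0 ≤ w e) (A B : Finset α) : 0 ≤ crossCap E w A B :=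
  sum_nonneg fun x hx => hw x (mem_of_mem_filter x hx)

lemma le_crossCap (hw : ∀ e ∈ E, 0 ≤ w e) {A B : Finset α} (he : e ∈ E) (h1 : e.1 ∈ A)
    (h2 : e.2 ∈ B) : w e ≤ crossCap E w A B :=
  single_le_sum (fun x hx => hw x (mem_of_mem_filter x hx)) (mem_filter.mpr ⟨he, h1, h2⟩)

lemma cutCap_union_add_cutCap_inter (E : Finset (α × α)) (w : α × α → ℝ) (C D : Finset α) :
    cutCap E w (C ∪ D) + cutCap E w (C ∩ D) + crossCap E w (C \ D) (D \ C)
      + crossCap E w (D \ C) (C \ D) = cutCap E w C + cutCap E w D := by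
  simp only [cutCap, crossCap, sum_filter, ← sum_add_distrib]
  refine sum_congr rfl fun x _ => ?_
  by_cases h1 : x.1 ∈ C <;> by_cases h2 : x.1 ∈ D <;> by_cases h3 : x.2 ∈ C <;>
    by_cases h4 : x.2 ∈ D <;> simp [h1, h2, h3, h4]

lemma cutCap_erase_of_contributes (he : e ∈ E) (hc : Contributes e C) :
    cutCap (E.erase e) w C = cutCap E w C - w e := by
  rw [cutCap, filter_erase, sum_erase_eq_sub (mem_filter.mpr ⟨he, hc⟩), cutCap]

lemma cutCap_erase_of_not_contributes (hc : ¬Contributes e C) :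
    cutCap (E.erase e) w C = cutCap E w C := by
  have he : e ∉ E.filter (fun x => x.1 ∈ C ∧ x.2 ∉ C) := fun h => hc (mem_filter.mp h).2
  rw [cutCap, filter_erase, erase_eq_of_notMem he, cutCap]

-- Without any (s,t)-cut both minima are `sInf ∅ = 0`, so no edge can be vital.
lemma Vital.exists_isCut (h : Vital E w s t e) : ∃ C, IsCut s t C := by
  by_contra hno
  push Not at hno
  simp [Vital, minCutCap, hno] at h

variable [Fintype α]

lemma finite_cutCaps (E : Finset (α × α)) (w : α × α → ℝ) (s t : α) :
    {x | ∃ C : Finset α, IsCut s t C ∧ cutCap E w C = x}.Finite :=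
  (Set.finite_range (cutCap E w)).subset fun _ ⟨C, _, hC⟩ => ⟨C, hC⟩

lemma minCutCap_le_cutCap (hC : IsCut s t C) : minCutCap E w s t ≤ cutCap E w C :=
  csInf_le (finite_cutCaps E w s t).bddBelow ⟨C, hC, rfl⟩

lemma exists_cutCap_eq_minCutCap (h : ∃ C, IsCut s t C) :
    ∃ C, IsCut s t C ∧ cutCap E w C = minCutCap E w s t := by
  obtain ⟨C, hC⟩ := h
  have hne : {x | ∃ C : Finset α, IsCut s t C ∧ cutCap E w C = x}.Nonempty := ⟨_, C, hC, rfl⟩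
  exact hne.csInf_mem (finite_cutCaps E w s t)

lemma Vital.exists_cut_sub_lt (h : Vital E w s t e) :
    ∃ D, IsCut s t D ∧ Contributes e D ∧ cutCap E w D - w e < minCutCap E w s t := by
  obtain ⟨D, hD, hDmin⟩ := exists_cutCap_eq_minCutCap (E := E.erase e) (w := w) h.exists_isCut
  by_cases hc : Contributes e D
  · exact ⟨D, hD, hc, by rw [← cutCap_erase_of_contributes h.1 hc, hDmin]; exact h.2⟩
  · have hle := minCutCap_le_cutCap (E := E) (w := w) hD
    rw [← cutCap_erase_of_not_contributes hc, hDmin] at hle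
    exact absurd h.2 hle.not_gt

lemma Vital.cutCap_sub_lt_of_isMincutFor (h : Vital E w s t e) (hC : IsMincutFor E w s t e C) :
    cutCap E w C - w e < minCutCap E w s t := by
  obtain ⟨D, hD, hDe, hDlt⟩ := h.exists_cut_sub_lt
  linarith [hC.2.2 D hD hDe]

lemma IsMincutFor.minCutCap_le_cutCap_sub_of_enters (hw : ∀ e ∈ E, 0 ≤ w e) (heE : e ∈ E)
    (hC : IsMincutFor E w s t e C) (hCe : cutCap E w C - w e ≤ minCutCap E w s t)
    (hD : IsCut s t D) {e' : α × α} (he' : e' ∈ E) (hD' : Contributes e' D) (h1 : e'.1 ∉ C)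
    (h2 : e'.2 ∈ C) : minCutCap E w s t ≤ cutCap E w D - w e' := by
  obtain ⟨hCcut, heC, hCmin⟩ := hC
  have hsub := cutCap_union_add_cutCap_inter E w C D
  have hunion := minCutCap_le_cutCap (E := E) (w := w) (hCcut.union hD)
  have hinter := minCutCap_le_cutCap (E := E) (w := w) (hCcut.inter hD)
  have hforward := crossCap_nonneg hw (C \ D) (D \ C)
  have hback : w e' ≤ crossCap E w (D \ C) (C \ D) :=
    le_crossCap hw he' (mem_sdiff.mpr ⟨hD'.1, h1⟩) (mem_sdiff.mpr ⟨h2, hD'.2⟩)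
  by_cases he1 : e.1 ∈ D
  · linarith [hCmin _ (hCcut.inter hD) (heC.inter he1)]
  by_cases he2 : e.2 ∈ D
  · have : w e ≤ crossCap E w (C \ D) (D \ C) :=
      le_crossCap hw heE (mem_sdiff.mpr ⟨heC.1, he1⟩) (mem_sdiff.mpr ⟨he2, heC.2⟩)
    linarith
  · linarith [hCmin _ (hCcut.union hD) (heC.union he2)]

end Uncrossing

theorem incoming_edge_of_mincut_nonvital_general (E : Finset (V × V)) (w : V × V → ℝ) (s t : V)
    (hpos : ∀ e ∈ E, 0 < w e) (e : V × V)
    (hvit : Vital E w s t e) (C : Finset V) (hC : IsMincutFor E w s t e C) :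
    ∀ e' ∈ E, e'.1 ∉ C → e'.2 ∈ C → ¬ Vital E w s t e' := by
  intro e' he' h1 h2 hvit'
  obtain ⟨D, hD, hDe', hDlt⟩ := hvit'.exists_cut_sub_lt
  have := hC.minCutCap_le_cutCap_sub_of_enters (fun x hx => (hpos x hx).le) hvit.1
    (hvit.cutCap_sub_lt_of_isMincutFor hC).le hD he' hDe' h1 h2
  linarith

/-- every edge entering a mincut for a vital edge is nonvital. -/
theorem incoming_edge_of_mincut_nonvital (E : Finset (V × V)) (w : V × V → ℝ) (s t : V)
    (hst : s ≠ t) (hpos : ∀ e ∈ E, 0 < w e) (e : V × V)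
    (hvit : Vital E w s t e) (C : Finset V) (hC : IsMincutFor E w s t e C) :
    ∀ e' ∈ E, e'.1 ∉ C → e'.2 ∈ C → ¬ Vital E w s t e' :=
  incoming_edge_of_mincut_nonvital_general E w s t hpos e hvit C hC
end
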